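/- arXiv:1406.5461 — 2 statements merged into one kernel-verified Lean document; each statement's English description precedes it below -/
import Mathlib

section
/- Let (B,P) be a solution of (LV) in Ω and let 1 ≤ i < j ≤ n. If B_i(0) > 0 and limsup_{t→∞} (P_i(t) + P_{i+1}(t) + ⋯ + P_{j−1}(t)) < (r_i − r_j)/(1 + r_1), then B_j(t) → 0 as t → ∞. -/
/-!
Each `B m` solves the scalar linear equation `B m' = g m · B m` for its per-capita growth
rate `g m`, so `B m t = B m 0 · exp (∫₀ᵗ g m)`. In `r i · g j - r j · g i` the logistic terms
cancel, leaving `-(r i - r j)(1 + ∑_{k ≥ j} P k) + r j ∑_{i ≤ k < j} P k`. Since `B i ≤ 1`,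
`∫₀ᵗ g i ≤ log (1 / B i 0)`, while by the limsup hypothesis the remaining rate is eventually
below the negative constant `-(r i - r j) + r j (r i - r j) / (1 + r 1)`. Hence `∫₀ᵗ g j → -∞`
and `B j → 0`.
-/
open Filter

def IsSolutionLV (n : ℕ) (r s : ℕ → ℝ) (B P : ℕ → ℝ → ℝ) : Prop :=
  (∀ i ∈ Finset.Icc 1 n, ∀ t : ℝ, 0 ≤ t →
      HasDerivAt (B i)
        (r i * B i t * (1 - 1 / r i - ∑ j ∈ Finset.Icc 1 n, (B j t + s j * P j t))
          - B i t * ∑ j ∈ Finset.Icc i n, P j t) t) ∧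
  (∀ i ∈ Finset.Icc 1 n, ∀ t : ℝ, 0 ≤ t →
      HasDerivAt (P i) ((s i)⁻¹ * P i t * ((∑ j ∈ Finset.Icc 1 i, B j t) - s i)) t) ∧
  (∀ t : ℝ, 0 ≤ t → (∀ i ∈ Finset.Icc 1 n, 0 ≤ B i t ∧ 0 ≤ P i t) ∧
      (∑ i ∈ Finset.Icc 1 n, (B i t + s i * P i t)) ≤ 1)

open Set Real intervalIntegral

lemma strictAntiOn_Icc_of_succ_lt {α : Type*} [Preorder α] {f : ℕ → α} {a b : ℕ}
    (hf : ∀ k, a ≤ k → k < b → f (k + 1) < f k) : StrictAntiOn f (Icc a b) :=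
  strictAntiOn_of_succ_lt ordConnected_Icc fun k _ hk hk' => by
    simp only [Order.succ_eq_add_one, mem_Icc] at hk hk'
    exact hf k hk.1 (by omega)

lemma strictMonoOn_Icc_of_lt_succ {α : Type*} [Preorder α] {f : ℕ → α} {a b : ℕ}
    (hf : ∀ k, a ≤ k → k < b → f k < f (k + 1)) : StrictMonoOn f (Icc a b) :=
  strictMonoOn_of_lt_succ ordConnected_Icc fun k _ hk hk' => by
    simp only [Order.succ_eq_add_one, mem_Icc] at hk hk'
    exact hf k hk.1 (by omega)

section LinearODE

variable {x g : ℝ → ℝ}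

lemma ContinuousOn.intervalIntegrable_of_Ici {a b c : ℝ} (hg : ContinuousOn g (Ici a))
    (hab : a ≤ b) (hbc : b ≤ c) : IntervalIntegrable g MeasureTheory.volume b c :=
  (hg.mono fun _ hu => le_trans hab (uIcc_of_le hbc ▸ hu).1).intervalIntegrable

lemma eq_mul_exp_integral_of_hasDerivAt (hg : ContinuousOn g (Ici 0))
    (hx : ∀ t, 0 ≤ t → HasDerivAt x (g t * x t) t) {t : ℝ} (ht : 0 ≤ t) :
    x t = x 0 * exp (∫ τ in 0..t, g τ) := by
  -- a continuous extension of `g` to all of `ℝ`, so that the FTC applies at `0` too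
  set g' : ℝ → ℝ := fun u => g (max u 0)
  have hg' : Continuous g' := hg.comp_continuous (continuous_id.max continuous_const)
    fun u => le_max_right u 0
  set I : ℝ → ℝ := fun u => ∫ τ in 0..u, g' τ
  have hI : ∀ u, HasDerivAt I (g' u) u := fun u =>
    integral_hasDerivAt_right (hg'.intervalIntegrable 0 u)
      (hg'.stronglyMeasurableAtFilter _ _) hg'.continuousAt
  have hderiv : ∀ u ∈ Ici (0 : ℝ), HasDerivAt (fun v => x v * exp (-I v)) 0 u := by
    intro u hu
    have hgu : g' u = g u := by simp only [g', max_eq_left (mem_Ici.1 hu)]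
    exact ((hx u hu).mul (hI u).neg.exp).congr_deriv (by rw [hgu]; ring)
  have hconst : x t * exp (-I t) = x 0 * exp (-I 0) :=
    constant_of_has_deriv_right_zero
      (fun u hu => (hderiv u hu.1).continuousAt.continuousWithinAt)
      (fun u hu => (hderiv u hu.1).hasDerivWithinAt) t ⟨ht, le_rfl⟩
  have hIg : I t = ∫ τ in 0..t, g τ := integral_congr fun u hu => by
    rw [uIcc_of_le ht] at hu
    simp only [g', max_eq_left hu.1]
  simp only [I, integral_same, neg_zero, exp_zero, mul_one] at hconst
  rw [← hIg, ← hconst, mul_assoc, ← exp_add, neg_add_cancel, exp_zero, mul_one]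

lemma integral_le_log_of_hasDerivAt (hg : ContinuousOn g (Ici 0))
    (hx : ∀ t, 0 ≤ t → HasDerivAt x (g t * x t) t) (hx0 : 0 < x 0) {t M : ℝ} (ht : 0 ≤ t)
    (hxt : x t ≤ M) : ∫ τ in 0..t, g τ ≤ log (M / x 0) := by
  rw [eq_mul_exp_integral_of_hasDerivAt hg hx ht, ← le_div_iff₀' hx0] at hxt
  exact (le_log_iff_exp_le ((exp_pos _).trans_le hxt)).2 hxt

lemma tendsto_zero_of_tendsto_integral_atBot (hg : ContinuousOn g (Ici 0))
    (hx : ∀ t, 0 ≤ t → HasDerivAt x (g t * x t) t)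
    (hI : Tendsto (fun t => ∫ τ in 0..t, g τ) atTop atBot) : Tendsto x atTop (nhds 0) := by
  have h := (tendsto_exp_atBot.comp hI).const_mul (x 0)
  rw [mul_zero] at h
  refine h.congr' ?_
  filter_upwards [eventually_ge_atTop 0] with t ht
  exact (eq_mul_exp_integral_of_hasDerivAt hg hx ht).symm

lemma tendsto_integral_atBot_of_eventually_le {h : ℝ → ℝ} (hh : ContinuousOn h (Ici 0))
    {c : ℝ} (hc : c < 0) (hev : ∀ᶠ t in atTop, h t ≤ c) :
    Tendsto (fun t => ∫ τ in 0..t, h τ) atTop atBot := by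
  obtain ⟨T, hT⟩ := eventually_atTop.1 (hev.and (eventually_ge_atTop 0))
  have hT0 : 0 ≤ T := (hT T le_rfl).2
  have hlin : Tendsto (fun t => (∫ τ in 0..T, h τ) + c * (t - T)) atTop atBot :=
    tendsto_atBot_add_const_left _ _
      ((tendsto_atTop_add_const_right _ _ tendsto_id).const_mul_atTop_of_neg hc)
  refine tendsto_atBot_mono' _ ?_ hlin
  filter_upwards [eventually_ge_atTop T] with t ht
  have htail : ∫ τ in T..t, h τ ≤ c * (t - T) := by
    have := integral_mono_on ht (hh.intervalIntegrable_of_Ici hT0 ht) intervalIntegrable_const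
      fun τ hτ => (hT τ hτ.1).1
    rwa [integral_const, smul_eq_mul, mul_comm] at this
  rw [← integral_add_adjacent_intervals (hh.intervalIntegrable_of_Ici le_rfl hT0)
    (hh.intervalIntegrable_of_Ici hT0 ht)]
  linarith

end LinearODE

noncomputable def growthRate (n : ℕ) (r s : ℕ → ℝ) (B P : ℕ → ℝ → ℝ) (m : ℕ) (t : ℝ) : ℝ :=
  r m * (1 - 1 / r m - ∑ k ∈ Finset.Icc 1 n, (B k t + s k * P k t))
    - ∑ k ∈ Finset.Icc m n, P k t

lemma r_mul_growthRate_sub_r_mul_growthRate {n : ℕ} {r s : ℕ → ℝ} {B P : ℕ → ℝ → ℝ}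
    {i j : ℕ} (hij : i < j) (hjn : j ≤ n) (hri : r i ≠ 0) (hrj : r j ≠ 0) (t : ℝ) :
    r i * growthRate n r s B P j t - r j * growthRate n r s B P i t =
      -(r i - r j) * (1 + ∑ k ∈ Finset.Icc j n, P k t)
        + r j * ∑ k ∈ Finset.Icc i (j - 1), P k t := by
  have hsplit : ∑ k ∈ Finset.Icc i n, P k t =
      ∑ k ∈ Finset.Icc i (j - 1), P k t + ∑ k ∈ Finset.Icc j n, P k t := by
    rw [← Finset.sum_union]
    · congr 1
      ext k
      simp only [Finset.mem_union, Finset.mem_Icc]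
      omega
    · rw [Finset.disjoint_left]
      intro k hk hk'
      simp only [Finset.mem_Icc] at hk hk'
      omega
  simp only [growthRate, hsplit]
  field_simp
  ring

namespace IsSolutionLV

variable {n : ℕ} {r s : ℕ → ℝ} {B P : ℕ → ℝ → ℝ} (hsol : IsSolutionLV n r s B P)
include hsol

lemma hasDerivAt_B {m : ℕ} (hm : m ∈ Finset.Icc 1 n) {t : ℝ} (ht : 0 ≤ t) :
    HasDerivAt (B m) (growthRate n r s B P m t * B m t) t := by
  convert hsol.1 m hm t ht using 1
  simp only [growthRate]
  ring

lemma B_nonneg {m : ℕ} (hm : m ∈ Finset.Icc 1 n) {t : ℝ} (ht : 0 ≤ t) : 0 ≤ B m t :=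
  ((hsol.2.2 t ht).1 m hm).1

lemma P_nonneg {m : ℕ} (hm : m ∈ Finset.Icc 1 n) {t : ℝ} (ht : 0 ≤ t) : 0 ≤ P m t :=
  ((hsol.2.2 t ht).1 m hm).2

lemma B_add_s_mul_P_le_one (hs : ∀ k ∈ Finset.Icc 1 n, 0 ≤ s k) {m : ℕ}
    (hm : m ∈ Finset.Icc 1 n) {t : ℝ} (ht : 0 ≤ t) : B m t + s m * P m t ≤ 1 :=
  (Finset.single_le_sum (fun k hk => add_nonneg (hsol.B_nonneg hk ht)
    (mul_nonneg (hs k hk) (hsol.P_nonneg hk ht))) hm).trans (hsol.2.2 t ht).2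

lemma B_le_one (hs : ∀ k ∈ Finset.Icc 1 n, 0 ≤ s k) {m : ℕ} (hm : m ∈ Finset.Icc 1 n)
    {t : ℝ} (ht : 0 ≤ t) : B m t ≤ 1 := by
  have := hsol.B_add_s_mul_P_le_one hs hm ht
  nlinarith [hs m hm, hsol.P_nonneg hm ht]

lemma P_le_inv (hs : ∀ k ∈ Finset.Icc 1 n, 0 < s k) {m : ℕ} (hm : m ∈ Finset.Icc 1 n)
    {t : ℝ} (ht : 0 ≤ t) : P m t ≤ (s m)⁻¹ := by
  have := hsol.B_add_s_mul_P_le_one (fun k hk => (hs k hk).le) hm ht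
  rw [← one_div, le_div_iff₀ (hs m hm)]
  linarith [hsol.B_nonneg hm ht]

lemma continuousOn_B {m : ℕ} (hm : m ∈ Finset.Icc 1 n) : ContinuousOn (B m) (Ici 0) :=
  fun t ht => (hsol.1 m hm t ht).continuousAt.continuousWithinAt

lemma continuousOn_P {m : ℕ} (hm : m ∈ Finset.Icc 1 n) : ContinuousOn (P m) (Ici 0) :=
  fun t ht => (hsol.2.1 m hm t ht).continuousAt.continuousWithinAt

lemma continuousOn_sum_P {a b : ℕ} (ha : 1 ≤ a) (hb : b ≤ n) :
    ContinuousOn (fun t => ∑ k ∈ Finset.Icc a b, P k t) (Ici 0) :=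
  continuousOn_finsetSum _ fun k hk => hsol.continuousOn_P <| by
    simp only [Finset.mem_Icc] at hk ⊢
    omega

lemma continuousOn_growthRate {m : ℕ} (hm : 1 ≤ m) :
    ContinuousOn (growthRate n r s B P m) (Ici 0) :=
  (continuousOn_const.mul (continuousOn_const.sub (continuousOn_finsetSum _ fun _ hk =>
    (hsol.continuousOn_B hk).add (continuousOn_const.mul (hsol.continuousOn_P hk))))).sub
    (hsol.continuousOn_sum_P hm le_rfl)

/-- The Lyapunov estimate for `r i log B j - r j log B i`, stated for the integrated growth
rates so that it makes sense when `B j` vanishes. -/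
lemma r_mul_integral_growthRate_le {i j : ℕ} (h1i : 1 ≤ i) (hij : i < j) (hjn : j ≤ n)
    (hrj : 0 < r j) (hrji : r j < r i) {t : ℝ} (ht : 0 ≤ t) :
    r i * ∫ τ in 0..t, growthRate n r s B P j τ ≤
      r j * (∫ τ in 0..t, growthRate n r s B P i τ) +
        ∫ τ in 0..t, (-(r i - r j) + r j * ∑ k ∈ Finset.Icc i (j - 1), P k τ) := by
  have hGi := (hsol.continuousOn_growthRate h1i).intervalIntegrable_of_Ici le_rfl ht
  have hGj :=
    (hsol.continuousOn_growthRate (h1i.trans hij.le)).intervalIntegrable_of_Ici le_rfl ht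
  have hPij :=
    (hsol.continuousOn_sum_P (b := j - 1) h1i (by omega)).intervalIntegrable_of_Ici le_rfl ht
  have hpoint : ∀ τ ∈ Icc 0 t,
      r i * growthRate n r s B P j τ - r j * growthRate n r s B P i τ ≤
        -(r i - r j) + r j * ∑ k ∈ Finset.Icc i (j - 1), P k τ := by
    intro τ hτ
    have hQj : 0 ≤ ∑ k ∈ Finset.Icc j n, P k τ := Finset.sum_nonneg fun k hk =>
      hsol.P_nonneg (by simp only [Finset.mem_Icc] at hk ⊢; omega) hτ.1
    rw [r_mul_growthRate_sub_r_mul_growthRate hij hjn (by linarith) hrj.ne']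
    nlinarith
  have := integral_mono_on ht ((hGj.const_mul _).sub (hGi.const_mul _))
    (intervalIntegrable_const.add (hPij.const_mul _)) hpoint
  rw [integral_sub (hGj.const_mul _) (hGi.const_mul _), integral_const_mul,
    integral_const_mul] at this
  linarith

lemma eventually_sum_P_lt_of_limsup_lt (hs : ∀ k ∈ Finset.Icc 1 n, 0 < s k) {a b : ℕ}
    (ha : 1 ≤ a) (hb : b ≤ n) {c : ℝ}
    (hlim : limsup (fun t => ∑ k ∈ Finset.Icc a b, P k t) atTop < c) :
    ∀ᶠ t in atTop, ∑ k ∈ Finset.Icc a b, P k t < c := by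
  refine eventually_lt_of_limsup_lt hlim (isBoundedUnder_of_eventually_le
    (a := ∑ k ∈ Finset.Icc a b, (s k)⁻¹) ?_)
  filter_upwards [eventually_ge_atTop 0] with t ht
  exact Finset.sum_le_sum fun k hk => hsol.P_le_inv hs
    (by simp only [Finset.mem_Icc] at hk ⊢; omega) ht

lemma tendsto_B_zero_of_tendsto_integral_atBot (hs : ∀ k ∈ Finset.Icc 1 n, 0 ≤ s k)
    {i j : ℕ} (h1i : 1 ≤ i) (hij : i < j) (hjn : j ≤ n) (hrj : 0 < r j) (hrji : r j < r i)
    (hBi0 : 0 < B i 0)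
    (hH : Tendsto
      (fun t => ∫ τ in 0..t, (-(r i - r j) + r j * ∑ k ∈ Finset.Icc i (j - 1), P k τ))
      atTop atBot) :
    Tendsto (B j) atTop (nhds 0) := by
  have hi : i ∈ Finset.Icc 1 n := Finset.mem_Icc.2 ⟨h1i, by omega⟩
  have hj : j ∈ Finset.Icc 1 n := Finset.mem_Icc.2 ⟨by omega, hjn⟩
  refine tendsto_zero_of_tendsto_integral_atBot (hsol.continuousOn_growthRate (by omega))
    (fun t ht => hsol.hasDerivAt_B hj ht) (tendsto_atBot_mono' _ ?_
      ((tendsto_atBot_add_const_left _ (r j * log (1 / B i 0)) hH).atBot_div_const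
        (hrj.trans hrji)))
  filter_upwards [eventually_ge_atTop 0] with t ht
  have hGi := integral_le_log_of_hasDerivAt (hsol.continuousOn_growthRate h1i)
    (fun t ht => hsol.hasDerivAt_B hi ht) hBi0 ht (hsol.B_le_one hs hi ht)
  have hGij := hsol.r_mul_integral_growthRate_le h1i hij hjn hrj hrji ht
  rw [le_div_iff₀' (hrj.trans hrji)]
  nlinarith [mul_le_mul_of_nonneg_left hGi hrj.le]

end IsSolutionLV

theorem stmt15_general
    (n : ℕ) (r s : ℕ → ℝ)
    (hr : ∀ i, 1 ≤ i → i < n → r (i + 1) < r i) (hrn : 1 < r n)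
    (hs1 : 0 < s 1) (hs : ∀ i, 1 ≤ i → i < n → s i < s (i + 1))
    (B P : ℕ → ℝ → ℝ) (hsol : IsSolutionLV n r s B P)
    (i j : ℕ) (h1i : 1 ≤ i) (hij : i < j) (hjn : j ≤ n)
    (hBi0 : 0 < B i 0)
    (hlim : limsup (fun t => ∑ m ∈ Finset.Icc i (j - 1), P m t) atTop <
      (r i - r j) / (1 + r 1)) :
    Tendsto (B j) atTop (nhds 0) := by
  have hr_anti := strictAntiOn_Icc_of_succ_lt hr
  have hrji : r j < r i := hr_anti ⟨h1i, by omega⟩ ⟨by omega, hjn⟩ hij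
  have hrj : 1 < r j := hrn.trans_le <| hr_anti.antitoneOn ⟨by omega, hjn⟩ ⟨by omega, le_rfl⟩ hjn
  have hrj1 : r j ≤ r 1 := hr_anti.antitoneOn ⟨le_rfl, by omega⟩ ⟨by omega, hjn⟩ (by omega)
  have hs_pos : ∀ k ∈ Finset.Icc 1 n, 0 < s k := fun k hk => by
    obtain ⟨h1k, hkn⟩ := Finset.mem_Icc.1 hk
    exact hs1.trans_le <|
      (strictMonoOn_Icc_of_lt_succ hs).monotoneOn ⟨le_rfl, by omega⟩ ⟨h1k, hkn⟩ h1k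
  have hPij := hsol.eventually_sum_P_lt_of_limsup_lt hs_pos h1i (by omega) hlim
  -- `r j < 1 + r 1` makes the long-run net rate `-(r i - r j) + r j * ∑ P` negative
  have hrate : -(r i - r j) + r j * ((r i - r j) / (1 + r 1)) < 0 := by
    have : r j * ((r i - r j) / (1 + r 1)) < r i - r j := by
      rw [mul_div_assoc', div_lt_iff₀ (by linarith)]
      nlinarith
    linarith
  refine hsol.tendsto_B_zero_of_tendsto_integral_atBot (fun k hk => (hs_pos k hk).le)
    h1i hij hjn (by linarith) hrji hBi0 (tendsto_integral_atBot_of_eventually_le ?_ hrate ?_)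
  · exact continuousOn_const.add
      (continuousOn_const.mul (hsol.continuousOn_sum_P h1i (by omega)))
  · filter_upwards [hPij] with t ht
    nlinarith

theorem stmt15
    (n : ℕ) (hn : 1 ≤ n) (r s : ℕ → ℝ)
    (hr : ∀ i, 1 ≤ i → i < n → r (i + 1) < r i) (hrn : 1 < r n)
    (hs1 : 0 < s 1) (hs : ∀ i, 1 ≤ i → i < n → s i < s (i + 1))
    (B P : ℕ → ℝ → ℝ) (hsol : IsSolutionLV n r s B P)
    (i j : ℕ) (h1i : 1 ≤ i) (hij : i < j) (hjn : j ≤ n)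
    (hBi0 : 0 < B i 0)
    (hlim : limsup (fun t => ∑ m ∈ Finset.Icc i (j - 1), P m t) atTop <
      (r i - r j) / (1 + r 1)) :
    Tendsto (B j) atTop (nhds 0) :=
  stmt15_general n r s hr hrn hs1 hs B P hsol i j h1i hij hjn hBi0 hlim
end

section
/- Assume the coexistence condition (ss): r_n/(1+Q_n) > 1. Let (B,P) be a solution of (LV) in Ω. If B_1(0) > 0, then limsup_{t→∞} B_1(t) ≥ s_1. If in addition P_1(0) > 0, then limsup_{t→∞} P_1(t) ≥ min{(r_1 − r_2)/(1 + r_1), (r_1 − 1 − r_1 s_1)/(r_1 s_1 + 1)} (when n = 1 the first term in the minimum is omitted). -/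
/-!
Write `g_i` for the per-capita growth rate of `B_i`. If `P_1 ≤ p` eventually, where
`p r_i < r_1 - r_i` for `i ≥ 2`, then `g_i - (r_i / r_1) g_1` is eventually negative, so
`B_i B_1^{-r_i/r_1}` decays exponentially and `B_i → 0`; once `B_2, …, B_i → 0`, the virus `P_i`
is outcompeted by `P_1` (as `s_i > s_1`) and `P_i → 0`, so by induction every strain `i ≥ 2` dies
out. What is left forces `log B_1 + r_1 s_1 log P_1` to grow linearly when moreover
`p (r_1 s_1 + 1) < r_1 - 1 - r_1 s_1`, contradicting `B_1 ≤ 1` and `P_1 ≤ 1 / s_1`. If instead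
`B_1 ≤ b < s_1` eventually, every `P_i` decays exponentially, the strains `i ≥ 2` die out as
before, and `log B_1` grows linearly because `1 + r_1 s_1 < r_1`, which follows from the
coexistence condition since `Q_n ≥ s_1 r_1`.
-/

open Filter

noncomputable def lvQ (r s : ℕ → ℝ) (k : ℕ) : ℝ :=
  (∑ i ∈ Finset.Icc 1 (k - 1), s i * (r i - r (i + 1))) + s k * r k

open Finset Real Topology

theorem sum_Icc_eq_sum_Ico_add_sum_Icc {M : Type*} [AddCommMonoid M] (f : ℕ → M) {a m b : ℕ}
    (ham : a ≤ m) (hmb : m ≤ b + 1) :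
    ∑ j ∈ Icc a b, f j = ∑ j ∈ Ico a m, f j + ∑ j ∈ Icc m b, f j := by
  rw [← Ico_add_one_right_eq_Icc, ← Ico_add_one_right_eq_Icc, sum_Ico_consecutive _ ham hmb]

theorem sum_Icc_one_eq_add_sum_Icc_two {M : Type*} [AddCommMonoid M] (f : ℕ → M) {n : ℕ}
    (hn : 1 ≤ n) : ∑ j ∈ Icc 1 n, f j = f 1 + ∑ j ∈ Icc 2 n, f j := by
  rw [sum_Icc_eq_sum_Ico_add_sum_Icc f (m := 2) one_le_two (by omega)]
  simp

section Calculus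

variable {f f' g h x y : ℝ → ℝ}

theorem le_gronwallBound_of_hasDerivAt {T K ε t : ℝ}
    (hf : ∀ u, T ≤ u → HasDerivAt f (f' u) u) (bound : ∀ u, T ≤ u → f' u ≤ K * f u + ε)
    (ht : T ≤ t) : f t ≤ gronwallBound (f T) K ε (t - T) :=
  le_gronwallBound_of_liminf_deriv_right_le
    (fun u hu => (hf u hu.1).continuousAt.continuousWithinAt)
    (fun u hu _ hr => (hf u hu.1).hasDerivWithinAt.liminf_right_slope_le hr) le_rfl
    (fun u hu => bound u hu.1) t ⟨ht, le_rfl⟩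

theorem tendsto_atTop_of_hasDerivAt_ge {c : ℝ} (hc : 0 < c)
    (hf : ∀ᶠ t in atTop, HasDerivAt f (f' t) t) (hf' : ∀ᶠ t in atTop, c ≤ f' t) :
    Tendsto f atTop atTop := by
  obtain ⟨T, hT⟩ := eventually_atTop.1 (hf.and hf')
  have affine : ∀ t, T ≤ t → f T + c * (t - T) ≤ f t := by
    intro t ht
    have := le_gronwallBound_of_hasDerivAt (f := fun u => -f u) (K := 0) (ε := -c)
      (fun u hu => (hT u hu).1.neg) (fun u hu => by linarith [(hT u hu).2]) ht
    rw [gronwallBound_K0] at this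
    linarith
  refine tendsto_atTop_mono' _ (eventually_atTop.2 ⟨T, affine⟩) ?_
  exact tendsto_atTop_add_const_left _ _
    ((tendsto_atTop_add_const_right _ _ tendsto_id).const_mul_atTop hc)

theorem tendsto_zero_of_hasDerivAt_mul_le {c : ℝ} (hc : 0 < c)
    (hx : ∀ᶠ t in atTop, HasDerivAt x (x t * g t) t) (hx0 : ∀ᶠ t in atTop, 0 ≤ x t)
    (hg : ∀ᶠ t in atTop, g t ≤ -c) : Tendsto x atTop (𝓝 0) := by
  obtain ⟨T, hT⟩ := eventually_atTop.1 (hx.and (hx0.and hg))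
  have decay : ∀ t, T ≤ t → x t ≤ x T * exp (-c * (t - T)) := by
    intro t ht
    have := le_gronwallBound_of_hasDerivAt (K := -c) (ε := 0) (fun u hu => (hT u hu).1)
      (fun u hu => by nlinarith [(hT u hu).2]) ht
    rwa [gronwallBound_ε0] at this
  have hlim : Tendsto (fun t => x T * exp (-c * (t - T))) atTop (𝓝 0) := by
    have hlin : Tendsto (fun t => -c * (t - T)) atTop atBot :=
      (tendsto_atTop_add_const_right _ (-T) tendsto_id).const_mul_atTop_of_neg (neg_lt_zero.2 hc)
    simpa using (tendsto_exp_atBot.comp hlin).const_mul (x T)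
  exact squeeze_zero' (eventually_atTop.2 ⟨T, fun t ht => (hT t ht).2.1⟩)
    (eventually_atTop.2 ⟨T, decay⟩) hlim

theorem pos_of_hasDerivAt_mul_ge {T M t : ℝ} (hx : ∀ u, T ≤ u → HasDerivAt x (x u * g u) u)
    (hx0 : ∀ u, T ≤ u → 0 ≤ x u) (hg : ∀ u, T ≤ u → -M ≤ g u) (hxT : 0 < x T) (ht : T ≤ t) :
    0 < x t := by
  have hlow := le_gronwallBound_of_hasDerivAt (f := fun u => -x u) (K := -M) (ε := 0)
    (fun u hu => (hx u hu).neg) (fun u hu => by nlinarith [hx0 u hu, hg u hu]) ht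
  rw [gronwallBound_ε0] at hlow
  linarith [mul_pos hxT (exp_pos (-M * (t - T)))]

theorem hasDerivAt_log_of_hasDerivAt_mul {t : ℝ} (hx : HasDerivAt x (x t * g t) t)
    (hxt : 0 < x t) : HasDerivAt (fun u => log (x u)) (g t) t :=
  (hx.log hxt.ne').congr_deriv (by field_simp)

theorem hasDerivAt_mul_rpow_neg {a t : ℝ} (hx : HasDerivAt x (x t * g t) t)
    (hy : HasDerivAt y (y t * h t) t) (hyt : 0 < y t) :
    HasDerivAt (fun u => x u * y u ^ (-a)) (x t * y t ^ (-a) * (g t - a * h t)) t := by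
  refine (hx.mul (hy.rpow_const (p := -a) (Or.inl hyt.ne'))).congr_deriv ?_
  rw [rpow_sub_one hyt.ne']
  field_simp
  ring

theorem tendsto_zero_of_hasDerivAt_mul_rpow_le {a c C : ℝ} (hc : 0 < c) (ha : 0 ≤ a)
    (hx : ∀ᶠ t in atTop, HasDerivAt x (x t * g t) t)
    (hy : ∀ᶠ t in atTop, HasDerivAt y (y t * h t) t)
    (hx0 : ∀ᶠ t in atTop, 0 ≤ x t) (hy0 : ∀ᶠ t in atTop, 0 < y t ∧ y t ≤ C)
    (hgh : ∀ᶠ t in atTop, g t - a * h t ≤ -c) : Tendsto x atTop (𝓝 0) := by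
  have hz : Tendsto (fun u => x u * y u ^ (-a)) atTop (𝓝 0) := by
    refine tendsto_zero_of_hasDerivAt_mul_le hc ?_ ?_ hgh
    · filter_upwards [hx, hy, hy0] with t hxt hyt hy0t
      exact hasDerivAt_mul_rpow_neg hxt hyt hy0t.1
    · filter_upwards [hx0, hy0] with t hxt hyt
      exact mul_nonneg hxt (rpow_nonneg hyt.1.le _)
  have hlim := hz.mul_const (C ^ a)
  rw [zero_mul] at hlim
  refine squeeze_zero' hx0 ?_ hlim
  filter_upwards [hx0, hy0] with t hxt ⟨hyt, hyC⟩
  calc x t = x t * y t ^ (-a) * y t ^ a := by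
        rw [mul_assoc, ← rpow_add hyt, neg_add_cancel, rpow_zero, mul_one]
    _ ≤ x t * y t ^ (-a) * C ^ a := by gcongr

end Calculus

theorem lvQ_add_two (r s : ℕ → ℝ) (m : ℕ) :
    lvQ r s (m + 2) = lvQ r s (m + 1) + (s (m + 2) - s (m + 1)) * r (m + 2) := by
  simp only [lvQ, show m + 2 - 1 = m + 1 by omega, Nat.add_sub_cancel]
  rw [sum_Icc_succ_top (by omega)]
  ring

theorem mul_le_lvQ {n : ℕ} {r s : ℕ → ℝ} (hn : 1 ≤ n) (hs : ∀ i, 1 ≤ i → i < n → s i ≤ s (i + 1))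
    (hr : ∀ i ∈ Icc 1 n, 0 ≤ r i) : s 1 * r 1 ≤ lvQ r s n := by
  induction n, hn using Nat.le_induction with
  | base => simp [lvQ, mul_comm]
  | succ k hk ih =>
    obtain ⟨m, rfl⟩ : ∃ m, k = m + 1 := ⟨k - 1, by omega⟩
    rw [lvQ_add_two]
    have hQ := ih (fun i h1 h2 => hs i h1 (by omega)) (fun i hi => hr i (by simp at hi ⊢; omega))
    have := hs (m + 1) (by omega) (by omega)
    have := hr (m + 2) (by simp)
    nlinarith

theorem one_add_mul_lt_of_one_lt_div_lvQ {n : ℕ} {r s : ℕ → ℝ} (hn : 1 ≤ n)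
    (hs : ∀ i, 1 ≤ i → i < n → s i ≤ s (i + 1)) (hs1 : 0 < s 1) (hr : ∀ i ∈ Icc 1 n, 0 < r i)
    (hrn : r n ≤ r 1) (hss : 1 < r n / (1 + lvQ r s n)) : 1 + r 1 * s 1 < r 1 := by
  have hQ := mul_le_lvQ hn hs fun j hj => (hr j hj).le
  have hQ1 : 0 < 1 + lvQ r s n := by nlinarith [mul_pos hs1 (hr 1 (mem_Icc.2 ⟨le_rfl, hn⟩))]
  nlinarith [(one_lt_div hQ1).1 hss]

noncomputable def lvGrowthB (n : ℕ) (r s : ℕ → ℝ) (B P : ℕ → ℝ → ℝ) (i : ℕ) (t : ℝ) : ℝ :=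
  r i * (1 - 1 / r i - ∑ j ∈ Icc 1 n, (B j t + s j * P j t)) - ∑ j ∈ Icc i n, P j t

noncomputable def lvGrowthP (s : ℕ → ℝ) (B : ℕ → ℝ → ℝ) (i : ℕ) (t : ℝ) : ℝ :=
  (s i)⁻¹ * ((∑ j ∈ Icc 1 i, B j t) - s i)

theorem lvGrowthB_eq {n : ℕ} {r s : ℕ → ℝ} {B P : ℕ → ℝ → ℝ} {i : ℕ} (hr : r i ≠ 0) (t : ℝ) :
    lvGrowthB n r s B P i t
      = r i * (1 - ∑ j ∈ Icc 1 n, (B j t + s j * P j t)) - 1 - ∑ j ∈ Icc i n, P j t := by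
  rw [lvGrowthB, mul_sub, mul_sub, mul_one_div_cancel hr, mul_sub]
  ring

noncomputable def lvTail (n : ℕ) (r s : ℕ → ℝ) (B P : ℕ → ℝ → ℝ) (t : ℝ) : ℝ :=
  ∑ j ∈ Icc 2 n, (r 1 * (B j t + s j * P j t) + P j t)

theorem lvGrowthB_one_eq {n : ℕ} {r s : ℕ → ℝ} {B P : ℕ → ℝ → ℝ} (hn : 1 ≤ n) (hr : r 1 ≠ 0)
    (t : ℝ) : lvGrowthB n r s B P 1 t
      = r 1 - 1 - r 1 * B 1 t - (r 1 * s 1 + 1) * P 1 t - lvTail n r s B P t := by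
  rw [lvGrowthB_eq hr, lvTail, sum_Icc_one_eq_add_sum_Icc_two _ hn,
    sum_Icc_one_eq_add_sum_Icc_two _ hn]
  simp only [sum_add_distrib, ← mul_sum]
  ring

theorem lvGrowthB_sub_div_mul_lvGrowthB_one {n i : ℕ} {r s : ℕ → ℝ} {B P : ℕ → ℝ → ℝ}
    (hi : i ∈ Icc 1 n) (hr1 : r 1 ≠ 0) (hri : r i ≠ 0) (t : ℝ) :
    lvGrowthB n r s B P i t - r i / r 1 * lvGrowthB n r s B P 1 t
      = (r i / r 1 - 1) * (1 + ∑ j ∈ Icc i n, P j t) + r i / r 1 * ∑ j ∈ Ico 1 i, P j t := by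
  rw [lvGrowthB_eq hri, lvGrowthB_eq hr1,
    sum_Icc_eq_sum_Ico_add_sum_Icc (fun j => P j t) (mem_Icc.1 hi).1 (by grind)]
  field_simp
  ring

theorem lvGrowthP_one (s : ℕ → ℝ) (B : ℕ → ℝ → ℝ) (t : ℝ) :
    lvGrowthP s B 1 t = (s 1)⁻¹ * (B 1 t - s 1) := by
  simp [lvGrowthP]

theorem tendsto_lvTail_zero {n : ℕ} {r s : ℕ → ℝ} {B P : ℕ → ℝ → ℝ}
    (h : ∀ j ∈ Icc 2 n, Tendsto (B j) atTop (𝓝 0) ∧ Tendsto (P j) atTop (𝓝 0)) :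
    Tendsto (lvTail n r s B P) atTop (𝓝 0) := by
  have := tendsto_finsetSum (Icc 2 n) fun j hj =>
    (((h j hj).1.add ((h j hj).2.const_mul (s j))).const_mul (r 1)).add (h j hj).2
  simp only [mul_zero, add_zero, sum_const_zero] at this
  exact this

namespace IsSolutionLV

variable {n : ℕ} {r s : ℕ → ℝ} {B P : ℕ → ℝ → ℝ} {i : ℕ} {t : ℝ}

theorem B_nonneg_s16 (h : IsSolutionLV n r s B P) (hi : i ∈ Icc 1 n) (ht : 0 ≤ t) : 0 ≤ B i t :=
  ((h.2.2 t ht).1 i hi).1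

theorem P_nonneg_s16 (h : IsSolutionLV n r s B P) (hi : i ∈ Icc 1 n) (ht : 0 ≤ t) : 0 ≤ P i t :=
  ((h.2.2 t ht).1 i hi).2

theorem hasDerivAt_B_s16 (h : IsSolutionLV n r s B P) (hi : i ∈ Icc 1 n) (ht : 0 ≤ t) :
    HasDerivAt (B i) (B i t * lvGrowthB n r s B P i t) t :=
  (h.1 i hi t ht).congr_deriv (by rw [lvGrowthB]; ring)

theorem hasDerivAt_P (h : IsSolutionLV n r s B P) (hi : i ∈ Icc 1 n) (ht : 0 ≤ t) :
    HasDerivAt (P i) (P i t * lvGrowthP s B i t) t :=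
  (h.2.1 i hi t ht).congr_deriv (by rw [lvGrowthP]; ring)

theorem B_le_one_s16 (h : IsSolutionLV n r s B P) (hs : ∀ j ∈ Icc 1 n, 0 ≤ s j)
    (hi : i ∈ Icc 1 n) (ht : 0 ≤ t) : B i t ≤ 1 :=
  (le_add_of_nonneg_right (mul_nonneg (hs i hi) (h.P_nonneg_s16 hi ht))).trans
    ((single_le_sum (fun j hj => add_nonneg (h.B_nonneg_s16 hj ht)
      (mul_nonneg (hs j hj) (h.P_nonneg_s16 hj ht))) hi).trans (h.2.2 t ht).2)

theorem sum_P_le (h : IsSolutionLV n r s B P) (hs1 : 0 < s 1) (hs : ∀ j ∈ Icc 1 n, s 1 ≤ s j)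
    (ht : 0 ≤ t) : ∑ j ∈ Icc 1 n, P j t ≤ 1 / s 1 := by
  rw [le_div_iff₀' hs1, mul_sum]
  refine (sum_le_sum fun j hj => ?_).trans (h.2.2 t ht).2
  nlinarith [hs j hj, h.B_nonneg_s16 hj ht, h.P_nonneg_s16 hj ht]

theorem P_le (h : IsSolutionLV n r s B P) (hs1 : 0 < s 1) (hs : ∀ j ∈ Icc 1 n, s 1 ≤ s j)
    (hi : i ∈ Icc 1 n) (ht : 0 ≤ t) : P i t ≤ 1 / s 1 :=
  (single_le_sum (fun _ hj => h.P_nonneg_s16 hj ht) hi).trans (h.sum_P_le hs1 hs ht)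

theorem B_pos (h : IsSolutionLV n r s B P) (hr : 0 < r i) (hs1 : 0 < s 1)
    (hs : ∀ j ∈ Icc 1 n, s 1 ≤ s j) (hi : i ∈ Icc 1 n) (h0 : 0 < B i 0) (ht : 0 ≤ t) :
    0 < B i t := by
  refine pos_of_hasDerivAt_mul_ge (M := 1 + 1 / s 1) (fun u hu => h.hasDerivAt_B_s16 hi hu)
    (fun u hu => h.B_nonneg_s16 hi hu) (fun u hu => ?_) h0 ht
  have hPi : ∑ j ∈ Icc i n, P j u ≤ 1 / s 1 :=
    (sum_le_sum_of_subset_of_nonneg (Icc_subset_Icc_left (mem_Icc.1 hi).1)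
      fun _ hj _ => h.P_nonneg_s16 hj hu).trans (h.sum_P_le hs1 hs hu)
  rw [lvGrowthB_eq hr.ne']
  nlinarith [(h.2.2 u hu).2]

theorem P_pos (h : IsSolutionLV n r s B P) (hsi : 0 < s i) (hi : i ∈ Icc 1 n) (h0 : 0 < P i 0)
    (ht : 0 ≤ t) : 0 < P i t := by
  refine pos_of_hasDerivAt_mul_ge (M := 1) (fun u hu => h.hasDerivAt_P hi hu)
    (fun u hu => h.P_nonneg_s16 hi hu) (fun u hu => ?_) h0 ht
  have hW : 0 ≤ ∑ j ∈ Icc 1 i, B j u := sum_nonneg fun j hj =>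
    h.B_nonneg_s16 (Icc_subset_Icc_right (mem_Icc.1 hi).2 hj) hu
  rw [lvGrowthP, mul_sub, inv_mul_cancel₀ hsi.ne']
  have := mul_nonneg (inv_nonneg.2 hsi.le) hW
  linarith

theorem tendsto_B_zero (h : IsSolutionLV n r s B P) (hi : i ∈ Icc 2 n) (hri : 0 < r i)
    (hri1 : r i ≤ r 1) (hB1 : ∀ᶠ t in atTop, 0 < B 1 t ∧ B 1 t ≤ 1)
    (hP1 : ∃ p, p * r i < r 1 - r i ∧ ∀ᶠ t in atTop, P 1 t ≤ p)
    (hP : ∀ j ∈ Ico 2 i, Tendsto (P j) atTop (𝓝 0)) : Tendsto (B i) atTop (𝓝 0) := by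
  obtain ⟨p, hp, hP1p⟩ := hP1
  obtain ⟨hi2, hin⟩ := mem_Icc.1 hi
  have hr1 : 0 < r 1 := hri.trans_le hri1
  have h1 : 1 ∈ Icc 1 n := mem_Icc.2 ⟨le_rfl, by omega⟩
  have hi1 : i ∈ Icc 1 n := mem_Icc.2 ⟨by omega, hin⟩
  set ε := (r 1 - r i - p * r i) / (2 * r 1) with hε_def
  have hε : 0 < ε := div_pos (by linarith) (by positivity)
  have hsmall : ∀ᶠ t in atTop, ∑ j ∈ Ico 2 i, P j t ≤ ε :=
    (tendsto_finsetSum _ hP).eventually (ge_mem_nhds (by simpa using hε))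
  -- with this weight the factor `1 - ∑ j, (B j + s j * P j)` cancels from `g_i - a g_1`
  set a := r i / r 1 with ha_def
  have ha0 : 0 ≤ a := by positivity
  have ha1 : a ≤ 1 := div_le_one_of_le₀ hri1 hr1.le
  have hap : a - 1 + a * p = -2 * ε := by
    rw [ha_def, hε_def]
    field_simp
    ring
  refine tendsto_zero_of_hasDerivAt_mul_rpow_le (a := a) hε ha0
    (eventually_ge_atTop 0 |>.mono fun t ht => h.hasDerivAt_B_s16 hi1 ht)
    (eventually_ge_atTop 0 |>.mono fun t ht => h.hasDerivAt_B_s16 h1 ht)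
    (eventually_ge_atTop 0 |>.mono fun t ht => h.B_nonneg_s16 hi1 ht) hB1 ?_
  filter_upwards [eventually_ge_atTop 0, hP1p, hsmall] with t ht hPt hQt
  rw [lvGrowthB_sub_div_mul_lvGrowthB_one hi1 hr1.ne' hri.ne', sum_eq_sum_Ico_succ_bot (by omega)]
  have hPS : 0 ≤ ∑ j ∈ Icc i n, P j t :=
    sum_nonneg fun j hj => h.P_nonneg_s16 (Icc_subset_Icc_left (by omega) hj) ht
  have hPS' : (a - 1) * (1 + ∑ j ∈ Icc i n, P j t) ≤ a - 1 := by nlinarith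
  have hP' : a * (P 1 t + ∑ j ∈ Ico 2 i, P j t) ≤ a * (p + ε) :=
    mul_le_mul_of_nonneg_left (by linarith) ha0
  linarith [mul_le_of_le_one_left hε.le ha1]

theorem tendsto_B_P_zero (h : IsSolutionLV n r s B P) (hr : ∀ j ∈ Icc 1 n, 0 < r j)
    (hr1 : ∀ j ∈ Icc 2 n, r j ≤ r 1) (hB1 : ∀ᶠ t in atTop, 0 < B 1 t ∧ B 1 t ≤ 1)
    (hP1 : ∀ i ∈ Icc 2 n, ∃ p, p * r i < r 1 - r i ∧ ∀ᶠ t in atTop, P 1 t ≤ p)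
    (hP : ∀ i ∈ Icc 2 n, (∀ j ∈ Icc 2 i, Tendsto (B j) atTop (𝓝 0)) →
      Tendsto (P i) atTop (𝓝 0)) :
    ∀ i ∈ Icc 2 n, Tendsto (B i) atTop (𝓝 0) ∧ Tendsto (P i) atTop (𝓝 0) := by
  intro i
  induction i using Nat.strong_induction_on with
  | _ i ih =>
    intro hi
    obtain ⟨hi2, hin⟩ := mem_Icc.1 hi
    have hBi : Tendsto (B i) atTop (𝓝 0) :=
      h.tendsto_B_zero hi (hr i (mem_Icc.2 ⟨by omega, hin⟩)) (hr1 i hi) hB1 (hP1 i hi)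
        fun j hj => (ih j (mem_Ico.1 hj).2 (mem_Icc.2 ⟨(mem_Ico.1 hj).1, by grind⟩)).2
    refine ⟨hBi, hP i hi fun j hj => ?_⟩
    obtain ⟨hj2, hji⟩ := mem_Icc.1 hj
    rcases hji.eq_or_lt with rfl | hji
    · exact hBi
    · exact (ih j hji (mem_Icc.2 ⟨hj2, by omega⟩)).1

theorem tendsto_P_zero_of_eventually_B_one_le (h : IsSolutionLV n r s B P) (hs1 : 0 < s 1)
    (hi : i ∈ Icc 1 n) (hsi : s 1 ≤ s i) {b : ℝ} (hb : b < s 1)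
    (hB1 : ∀ᶠ t in atTop, B 1 t ≤ b) (hB : ∀ j ∈ Icc 2 i, Tendsto (B j) atTop (𝓝 0)) :
    Tendsto (P i) atTop (𝓝 0) := by
  set ε := (s 1 - b) / 2 with hε_def
  have hε : 0 < ε := by linarith
  have hsi0 : 0 < s i := hs1.trans_le hsi
  have hsmall : ∀ᶠ t in atTop, ∑ j ∈ Icc 2 i, B j t ≤ ε :=
    (tendsto_finsetSum _ hB).eventually (ge_mem_nhds (by simpa using hε))
  refine tendsto_zero_of_hasDerivAt_mul_le (div_pos hε hsi0)
    (eventually_ge_atTop 0 |>.mono fun t ht => h.hasDerivAt_P hi ht)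
    (eventually_ge_atTop 0 |>.mono fun t ht => h.P_nonneg_s16 hi ht) ?_
  filter_upwards [hB1, hsmall] with t hBt hQt
  rw [lvGrowthP, sum_Icc_one_eq_add_sum_Icc_two _ (mem_Icc.1 hi).1, ← neg_div, div_eq_inv_mul]
  exact mul_le_mul_of_nonneg_left (by linarith) (inv_nonneg.2 hsi0.le)

theorem tendsto_P_zero_of_P_one_pos (h : IsSolutionLV n r s B P) (hs1 : 0 < s 1)
    (hs : ∀ j ∈ Icc 1 n, s 1 ≤ s j) (hi : i ∈ Icc 2 n) (hsi : s 1 < s i)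
    (hP1 : ∀ t, 0 ≤ t → 0 < P 1 t) (hB : ∀ j ∈ Icc 2 i, Tendsto (B j) atTop (𝓝 0)) :
    Tendsto (P i) atTop (𝓝 0) := by
  obtain ⟨hi2, hin⟩ := mem_Icc.1 hi
  have h1 : 1 ∈ Icc 1 n := mem_Icc.2 ⟨le_rfl, by omega⟩
  have hi1 : i ∈ Icc 1 n := mem_Icc.2 ⟨by omega, hin⟩
  have hsi0 : 0 < s i := hs1.trans hsi
  set ε := (s i - s 1) / 2 with hε_def
  have hε : 0 < ε := by linarith
  have hsmall : ∀ᶠ t in atTop, ∑ j ∈ Icc 2 i, B j t ≤ ε :=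
    (tendsto_finsetSum _ hB).eventually (ge_mem_nhds (by simpa using hε))
  refine tendsto_zero_of_hasDerivAt_mul_rpow_le (a := s 1 / s i) (C := 1 / s 1)
    (div_pos hε hsi0) (by positivity)
    (eventually_ge_atTop 0 |>.mono fun t ht => h.hasDerivAt_P hi1 ht)
    (eventually_ge_atTop 0 |>.mono fun t ht => h.hasDerivAt_P h1 ht)
    (eventually_ge_atTop 0 |>.mono fun t ht => h.P_nonneg_s16 hi1 ht)
    (eventually_ge_atTop 0 |>.mono fun t ht => ⟨hP1 t ht, h.P_le hs1 hs h1 ht⟩) ?_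
  filter_upwards [hsmall] with t hQt
  have hid : lvGrowthP s B i t - s 1 / s i * lvGrowthP s B 1 t
      = (∑ j ∈ Icc 2 i, B j t - (s i - s 1)) / s i := by
    rw [lvGrowthP_one, lvGrowthP, sum_Icc_one_eq_add_sum_Icc_two _ (by omega)]
    field_simp
    ring
  rw [hid, ← neg_div]
  exact div_le_div_of_nonneg_right (by linarith) hsi0.le

theorem not_eventually_B_one_le (h : IsSolutionLV n r s B P) (hn : 1 ≤ n)
    (hr : ∀ j ∈ Icc 1 n, 0 < r j) (hr1 : ∀ j ∈ Icc 2 n, r j < r 1) (hs1 : 0 < s 1)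
    (hs : ∀ j ∈ Icc 1 n, s 1 ≤ s j) (hrs : 1 + r 1 * s 1 < r 1) (hB10 : 0 < B 1 0) {b : ℝ}
    (hb : b < s 1) : ¬ ∀ᶠ t in atTop, B 1 t ≤ b := by
  intro hB1
  have h1 : 1 ∈ Icc 1 n := mem_Icc.2 ⟨le_rfl, hn⟩
  have hs0 : ∀ j ∈ Icc 1 n, 0 ≤ s j := fun j hj => hs1.le.trans (hs j hj)
  have hB1pos : ∀ t, 0 ≤ t → 0 < B 1 t := fun t ht => h.B_pos (hr 1 h1) hs1 hs h1 hB10 ht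
  have hP1 : Tendsto (P 1) atTop (𝓝 0) :=
    h.tendsto_P_zero_of_eventually_B_one_le hs1 h1 le_rfl hb hB1 (by simp)
  have hthreshold : ∀ i ∈ Icc 2 n, ∃ p, p * r i < r 1 - r i ∧ ∀ᶠ t in atTop, P 1 t ≤ p := by
    intro i hi
    have hri := hr i (Icc_subset_Icc_left one_le_two hi)
    refine ⟨(r 1 - r i) / (2 * r i), ?_, hP1.eventually (ge_mem_nhds ?_)⟩
    · rw [div_mul_eq_mul_div, div_lt_iff₀ (by positivity)]
      nlinarith [hr1 i hi]
    · exact div_pos (by linarith [hr1 i hi]) (by positivity)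
  have hBP := h.tendsto_B_P_zero hr (fun j hj => (hr1 j hj).le)
    (eventually_ge_atTop 0 |>.mono fun t ht => ⟨hB1pos t ht, h.B_le_one_s16 hs0 h1 ht⟩) hthreshold
    fun i hi hB => h.tendsto_P_zero_of_eventually_B_one_le hs1 (Icc_subset_Icc_left one_le_two hi)
      (hs i (Icc_subset_Icc_left one_le_two hi)) hb hB1 hB
  set δ := r 1 - 1 - r 1 * s 1
  have herr : ∀ᶠ t in atTop, (r 1 * s 1 + 1) * P 1 t + lvTail n r s B P t ≤ δ / 2 :=
    ((hP1.const_mul _).add (tendsto_lvTail_zero hBP)).eventually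
      (ge_mem_nhds (by simp only [mul_zero, add_zero]; linarith))
  have hgrow : Tendsto (fun t => log (B 1 t)) atTop atTop := by
    refine tendsto_atTop_of_hasDerivAt_ge (c := δ / 2) (by linarith)
      (eventually_ge_atTop 0 |>.mono fun t ht =>
        hasDerivAt_log_of_hasDerivAt_mul (h.hasDerivAt_B_s16 h1 ht) (hB1pos t ht)) ?_
    filter_upwards [hB1, herr] with t hBt hEt
    rw [lvGrowthB_one_eq hn (hr 1 h1).ne']
    nlinarith [hr 1 h1]
  obtain ⟨t, ht, hlog⟩ := ((eventually_ge_atTop 0).and (hgrow.eventually_gt_atTop 0)).exists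
  exact (log_nonpos (h.B_nonneg_s16 h1 ht) (h.B_le_one_s16 hs0 h1 ht)).not_gt hlog

theorem not_eventually_P_one_le (h : IsSolutionLV n r s B P) (hn : 1 ≤ n)
    (hr : ∀ j ∈ Icc 1 n, 0 < r j) (hr1 : ∀ j ∈ Icc 2 n, r j ≤ r 1) (hs1 : 0 < s 1)
    (hs : ∀ j ∈ Icc 1 n, s 1 ≤ s j) (hs_lt : ∀ j ∈ Icc 2 n, s 1 < s j) (hB10 : 0 < B 1 0)
    (hP10 : 0 < P 1 0) {p : ℝ} (hp : p * (r 1 * s 1 + 1) < r 1 - 1 - r 1 * s 1)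
    (hpr : ∀ i ∈ Icc 2 n, p * r i < r 1 - r i) : ¬ ∀ᶠ t in atTop, P 1 t ≤ p := by
  intro hP1
  have h1 : 1 ∈ Icc 1 n := mem_Icc.2 ⟨le_rfl, hn⟩
  have hs0 : ∀ j ∈ Icc 1 n, 0 ≤ s j := fun j hj => hs1.le.trans (hs j hj)
  have hB1pos : ∀ t, 0 ≤ t → 0 < B 1 t := fun t ht => h.B_pos (hr 1 h1) hs1 hs h1 hB10 ht
  have hP1pos : ∀ t, 0 ≤ t → 0 < P 1 t := fun t ht => h.P_pos hs1 h1 hP10 ht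
  have hBP := h.tendsto_B_P_zero hr hr1
    (eventually_ge_atTop 0 |>.mono fun t ht => ⟨hB1pos t ht, h.B_le_one_s16 hs0 h1 ht⟩)
    (fun i hi => ⟨p, hpr i hi, hP1⟩)
    fun i hi hB => h.tendsto_P_zero_of_P_one_pos hs1 hs hi (hs_lt i hi) hP1pos hB
  set δ := r 1 - 1 - r 1 * s 1 - p * (r 1 * s 1 + 1)
  have herr : ∀ᶠ t in atTop, lvTail n r s B P t ≤ δ / 2 :=
    (tendsto_lvTail_zero hBP).eventually (ge_mem_nhds (by linarith))
  -- the weight `r 1 * s 1` cancels the dependence of the growth rate on `B 1`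
  have hgrow : Tendsto (fun t => log (B 1 t) + r 1 * s 1 * log (P 1 t)) atTop atTop := by
    refine tendsto_atTop_of_hasDerivAt_ge (c := δ / 2) (by linarith)
      (eventually_ge_atTop 0 |>.mono fun t ht =>
        (hasDerivAt_log_of_hasDerivAt_mul (h.hasDerivAt_B_s16 h1 ht) (hB1pos t ht)).add
          ((hasDerivAt_log_of_hasDerivAt_mul (h.hasDerivAt_P h1 ht) (hP1pos t ht)).const_mul _))
      ?_
    filter_upwards [hP1, herr] with t hPt hEt
    have hP : r 1 * s 1 * lvGrowthP s B 1 t = r 1 * (B 1 t - s 1) := by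
      rw [lvGrowthP_one]
      field_simp
    have hpP : (r 1 * s 1 + 1) * P 1 t ≤ (r 1 * s 1 + 1) * p :=
      mul_le_mul_of_nonneg_left hPt (by nlinarith [mul_pos (hr 1 h1) hs1])
    rw [lvGrowthB_one_eq hn (hr 1 h1).ne', hP]
    linarith
  obtain ⟨t, ht, hlog⟩ :=
    ((eventually_ge_atTop 0).and (hgrow.eventually_gt_atTop (r 1 * s 1 * log (1 / s 1)))).exists
  have hB : log (B 1 t) ≤ 0 := log_nonpos (h.B_nonneg_s16 h1 ht) (h.B_le_one_s16 hs0 h1 ht)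
  have hP : log (P 1 t) ≤ log (1 / s 1) := log_le_log (hP1pos t ht) (h.P_le hs1 hs h1 ht)
  nlinarith [mul_pos (hr 1 h1) hs1]

theorem le_limsup_B_one (h : IsSolutionLV n r s B P) (hn : 1 ≤ n)
    (hr : ∀ j ∈ Icc 1 n, 0 < r j) (hr1 : ∀ j ∈ Icc 2 n, r j < r 1) (hs1 : 0 < s 1)
    (hs : ∀ j ∈ Icc 1 n, s 1 ≤ s j) (hrs : 1 + r 1 * s 1 < r 1) (hB10 : 0 < B 1 0) :
    s 1 ≤ limsup (B 1) atTop := by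
  have h1 : 1 ∈ Icc 1 n := mem_Icc.2 ⟨le_rfl, hn⟩
  refine le_limsup_of_le (isBoundedUnder_of_eventually_le (a := 1) (eventually_ge_atTop 0 |>.mono
    fun t ht => h.B_le_one_s16 (fun j hj => hs1.le.trans (hs j hj)) h1 ht)) fun b hb => ?_
  by_contra! hbs
  exact h.not_eventually_B_one_le hn hr hr1 hs1 hs hrs hB10 hbs hb

theorem le_limsup_P_one (h : IsSolutionLV n r s B P) (hn : 1 ≤ n)
    (hr : ∀ j ∈ Icc 1 n, 0 < r j) (hr1 : ∀ j ∈ Icc 2 n, r j ≤ r 1) (hs1 : 0 < s 1)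
    (hs : ∀ j ∈ Icc 1 n, s 1 ≤ s j) (hs_lt : ∀ j ∈ Icc 2 n, s 1 < s j) (hB10 : 0 < B 1 0)
    (hP10 : 0 < P 1 0) {m : ℝ} (hm : ∀ p, 0 ≤ p → p < m →
      p * (r 1 * s 1 + 1) < r 1 - 1 - r 1 * s 1 ∧ ∀ i ∈ Icc 2 n, p * r i < r 1 - r i) :
    m ≤ limsup (P 1) atTop := by
  have h1 : 1 ∈ Icc 1 n := mem_Icc.2 ⟨le_rfl, hn⟩
  refine le_limsup_of_le (isBoundedUnder_of_eventually_le (eventually_ge_atTop 0 |>.mono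
    fun t ht => h.P_le hs1 hs h1 ht)) fun p hp => ?_
  by_contra! hpm
  obtain ⟨t, ht, hpt⟩ := ((eventually_ge_atTop 0).and hp).exists
  have hp0 : 0 ≤ p := (h.P_nonneg_s16 h1 ht).trans hpt
  exact h.not_eventually_P_one_le hn hr hr1 hs1 hs hs_lt hB10 hP10 (hm p hp0 hpm).1
    (hm p hp0 hpm).2 hp

end IsSolutionLV

theorem stmt16
    (n : ℕ) (hn : 1 ≤ n) (r s : ℕ → ℝ)
    (hr : ∀ i, 1 ≤ i → i < n → r (i + 1) < r i) (hrn : 1 < r n)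
    (hs1 : 0 < s 1) (hs : ∀ i, 1 ≤ i → i < n → s i < s (i + 1))
    (hss : 1 < r n / (1 + lvQ r s n))
    (B P : ℕ → ℝ → ℝ) (hsol : IsSolutionLV n r s B P)
    (hB10 : 0 < B 1 0) :
    s 1 ≤ limsup (B 1) atTop ∧
    (0 < P 1 0 →
      (1 < n →
        min ((r 1 - r 2) / (1 + r 1)) ((r 1 - 1 - r 1 * s 1) / (r 1 * s 1 + 1)) ≤
          limsup (P 1) atTop) ∧
      (n = 1 → (r 1 - 1 - r 1 * s 1) / (r 1 * s 1 + 1) ≤ limsup (P 1) atTop)) := by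
  have h1 : (1 : ℕ) ∈ Set.Icc 1 n := ⟨le_rfl, hn⟩
  have hr_anti : StrictAntiOn r (Set.Icc 1 n) :=
    strictAntiOn_of_add_one_lt Set.ordConnected_Icc fun i _ hi hi1 => hr i hi.1 hi1.2
  have hs_mono : StrictMonoOn s (Set.Icc 1 n) :=
    strictMonoOn_of_lt_add_one Set.ordConnected_Icc fun i _ hi hi1 => hs i hi.1 hi1.2
  have hr_pos : ∀ j ∈ Icc 1 n, 0 < r j := fun j hj =>
    one_pos.trans (hrn.trans_le (hr_anti.antitoneOn (mem_Icc.1 hj) ⟨hn, le_rfl⟩ (mem_Icc.1 hj).2))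
  have hr_lt : ∀ j ∈ Icc 2 n, r j < r 1 := fun j hj =>
    hr_anti h1 ⟨by grind, (mem_Icc.1 hj).2⟩ (by grind)
  have hs_le : ∀ j ∈ Icc 1 n, s 1 ≤ s j := fun j hj =>
    hs_mono.monotoneOn h1 (mem_Icc.1 hj) (mem_Icc.1 hj).1
  have hs_lt : ∀ j ∈ Icc 2 n, s 1 < s j := fun j hj =>
    hs_mono h1 ⟨by grind, (mem_Icc.1 hj).2⟩ (by grind)
  have hrs : 1 + r 1 * s 1 < r 1 := one_add_mul_lt_of_one_lt_div_lvQ hn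
    (fun i hi1 hin => (hs i hi1 hin).le) hs1 hr_pos (hr_anti.antitoneOn h1 ⟨hn, le_rfl⟩ hn) hss
  have hden : 0 < r 1 * s 1 + 1 := by nlinarith [mul_pos hs1 (hr_pos 1 (mem_Icc.2 h1))]
  have hP := hsol.le_limsup_P_one hn hr_pos (fun j hj => (hr_lt j hj).le) hs1 hs_le hs_lt hB10
  refine ⟨hsol.le_limsup_B_one hn hr_pos hr_lt hs1 hs_le hrs hB10, fun hP10 => ⟨fun hn1 => ?_,
    fun hn1 => hP hP10 fun p _ hpm => ⟨(lt_div_iff₀ hden).1 hpm, by simp [hn1]⟩⟩⟩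
  refine hP hP10 fun p hp hpm => ⟨(lt_div_iff₀ hden).1 (hpm.trans_le (min_le_right _ _)),
    fun i hi => ?_⟩
  have hp2 := (lt_div_iff₀ (by linarith)).1 (hpm.trans_le (min_le_left _ _))
  have hri2 : r i ≤ r 2 :=
    hr_anti.antitoneOn ⟨one_le_two, by omega⟩ ⟨by grind, (mem_Icc.1 hi).2⟩ (mem_Icc.1 hi).1
  nlinarith [hr_lt i hi]
end
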